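/- arXiv:2508.08449 — 2 statements merged into one kernel-verified Lean document; each statement's English description precedes it below -/
import Mathlib

section
/- Let K be a compact subset of ℂ, n ∈ ℕ, and w : K → [0,∞) a bounded upper semicontinuous function nonzero at at least n+1 points of K. If T is a monic polynomial of degree n minimizing ‖·‖_{K,w} among monic polynomials of degree n, then the set { z ∈ K : w(z)|T(z)| = ‖T‖_{K,w} } of w-extremal points of T contains at least n+1 points. -/
/-
If the extremal set `E` of the minimiser `T` had at most `n` points, the Lagrange interpolant `Q`
of `T` on `E` has degree `< n`, so `T - ε Q` is again monic of degree `n`. Near `E` we have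
`T - ε Q = (1 - ε) T + ε (T - Q)` with `T - Q` small, and away from `E` the upper semicontinuous
function `w |T|` stays uniformly below `‖T‖_{K,w}` on a compact set, so for small `ε > 0` the
weighted norm strictly decreases, contradicting minimality.
-/

open Polynomial Metric Set

/-- The weighted sup norm `‖P‖_{E,v} = sup_{z ∈ E} v(z) |P(z)|`. -/
noncomputable def wnorm (E : Set ℂ) (v : ℂ → ℝ) (P : Polynomial ℂ) : ℝ :=
  sSup ((fun z => v z * ‖P.eval z‖) '' E)

open Filter Topology

theorem UpperSemicontinuousOn.mul_continuousOn {α : Type*} [TopologicalSpace α] {s : Set α}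
    {f g : α → ℝ} (hf : UpperSemicontinuousOn f s) (hg : ContinuousOn g s)
    (hf0 : ∀ x ∈ s, 0 ≤ f x) (hg0 : ∀ x ∈ s, 0 ≤ g x) :
    UpperSemicontinuousOn (fun x => f x * g x) s := by
  intro x hx y hy
  have hlim : Tendsto (fun ε : ℝ => (f x + ε) * (g x + ε)) (𝓝[>] 0) (𝓝 (f x * g x)) := by
    refine tendsto_nhdsWithin_of_tendsto_nhds ?_
    simpa using ((tendsto_const_nhds (x := f x)).add (tendsto_id (x := 𝓝 (0 : ℝ)))).mul
      ((tendsto_const_nhds (x := g x)).add tendsto_id)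
  obtain ⟨ε, hεy, hε⟩ :=
    ((hlim.eventually_lt_const hy).and self_mem_nhdsWithin).exists
  filter_upwards [hf x hx _ (lt_add_of_pos_right _ hε),
    (hg x hx).eventually_lt_const (lt_add_of_pos_right _ hε), self_mem_nhdsWithin]
    with z hfz hgz hz
  exact (mul_lt_mul'' hfz hgz (hf0 z hz) (hg0 z hz)).trans hεy

theorem UpperSemicontinuousOn.exists_lt_forall_le {α β : Type*} [TopologicalSpace α]
    [LinearOrder β] [NoMinOrder β] {s : Set α} {f : α → β} {M : β} (hs : IsCompact s)
    (hf : UpperSemicontinuousOn f s) (hlt : ∀ x ∈ s, f x < M) :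
    ∃ M' < M, ∀ x ∈ s, f x ≤ M' := by
  rcases s.eq_empty_or_nonempty with rfl | hne
  · obtain ⟨M', hM'⟩ := exists_lt M
    exact ⟨M', hM', by simp⟩
  · obtain ⟨a, ha, hmax⟩ := hf.exists_isMaxOn hne hs
    exact ⟨f a, hlt a ha, hmax⟩

theorem norm_sub_smul_le_convex {E : Type*} [SeminormedAddCommGroup E] [NormedSpace ℝ E]
    (a b : E) {ε : ℝ} (hε0 : 0 ≤ ε) (hε1 : ε ≤ 1) :
    ‖a - ε • b‖ ≤ (1 - ε) * ‖a‖ + ε * ‖a - b‖ := by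
  calc ‖a - ε • b‖ = ‖(1 - ε) • a + ε • (a - b)‖ := by
        congr 1; rw [smul_sub, sub_smul, one_smul]; abel
    _ ≤ (1 - ε) * ‖a‖ + ε * ‖a - b‖ := by
        refine (norm_add_le _ _).trans_eq ?_
        rw [norm_smul_of_nonneg (sub_nonneg.2 hε1), norm_smul_of_nonneg hε0]

section WeightedNorm

variable {K : Set ℂ} {w : ℂ → ℝ}

theorem upperSemicontinuousOn_weight_mul_norm_eval (hw0 : ∀ z ∈ K, 0 ≤ w z)
    (husc : UpperSemicontinuousOn w K) (P : ℂ[X]) :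
    UpperSemicontinuousOn (fun z => w z * ‖P.eval z‖) K :=
  husc.mul_continuousOn P.continuous.norm.continuousOn hw0 fun _ _ => norm_nonneg _

theorem bddAbove_weight_mul_norm_eval (hK : IsCompact K) (hw0 : ∀ z ∈ K, 0 ≤ w z)
    (husc : UpperSemicontinuousOn w K) (P : ℂ[X]) :
    BddAbove ((fun z => w z * ‖P.eval z‖) '' K) :=
  (upperSemicontinuousOn_weight_mul_norm_eval hw0 husc P).bddAbove_of_isCompact hK

theorem le_wnorm (hK : IsCompact K) (hw0 : ∀ z ∈ K, 0 ≤ w z)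
    (husc : UpperSemicontinuousOn w K) (P : ℂ[X]) {z : ℂ} (hz : z ∈ K) :
    w z * ‖P.eval z‖ ≤ wnorm K w P :=
  le_csSup (bddAbove_weight_mul_norm_eval hK hw0 husc P) (mem_image_of_mem _ hz)

theorem wnorm_le {P : ℂ[X]} {C : ℝ} (hK : K.Nonempty) (h : ∀ z ∈ K, w z * ‖P.eval z‖ ≤ C) :
    wnorm K w P ≤ C :=
  csSup_le (hK.image _) (forall_mem_image.2 h)

theorem nonempty_of_wnorm_pos {P : ℂ[X]} (h : 0 < wnorm K w P) : K.Nonempty := by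
  rw [nonempty_iff_ne_empty]
  rintro rfl
  simp [wnorm] at h

theorem wnorm_pos (hK : IsCompact K) (hw0 : ∀ z ∈ K, 0 ≤ w z)
    (husc : UpperSemicontinuousOn w K) {P : ℂ[X]} (hP : P ≠ 0) {S : Finset ℂ} (hSK : ↑S ⊆ K)
    (hS : P.natDegree < S.card) (hSw : ∀ z ∈ S, w z ≠ 0) : 0 < wnorm K w P := by
  obtain ⟨z, hzS, hPz⟩ : ∃ z ∈ S, P.eval z ≠ 0 := by
    by_contra! hroots
    have hsub : S ⊆ P.roots.toFinset := fun z hz => by simpa [hP] using hroots z hz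
    have := (Finset.card_le_card hsub).trans
      (P.roots.toFinset_card_le.trans P.card_roots')
    omega
  exact (mul_pos ((hw0 z (hSK hzS)).lt_of_ne' (hSw z hzS)) (norm_pos_iff.2 hPz)).trans_le
    (le_wnorm hK hw0 husc P (hSK hzS))

theorem exists_lt_wnorm_forall_le_of_le (hK : IsCompact K) (hw0 : ∀ z ∈ K, 0 ≤ w z)
    (husc : UpperSemicontinuousOn w K) {T Q : ℂ[X]}
    (hQ : ∀ z ∈ K, w z * ‖T.eval z‖ = wnorm K w T → Q.eval z = T.eval z) {c : ℝ} (hc : 0 < c) :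
    ∃ M' < wnorm K w T, ∀ z ∈ K, c ≤ w z * ‖(T - Q).eval z‖ → w z * ‖T.eval z‖ ≤ M' := by
  have hlt : ∀ z ∈ K ∩ (fun z => w z * ‖(T - Q).eval z‖) ⁻¹' Ici c,
      w z * ‖T.eval z‖ < wnorm K w T := by
    rintro z ⟨hzK, hcz⟩
    refine (le_wnorm hK hw0 husc T hzK).lt_of_ne fun hz => ?_
    simp only [mem_preimage, mem_Ici, eval_sub, hQ z hzK hz, sub_self, norm_zero,
      mul_zero] at hcz
    linarith
  obtain ⟨M', hM', hle⟩ := ((upperSemicontinuousOn_weight_mul_norm_eval hw0 husc T).mono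
    inter_subset_left).exists_lt_forall_le
    ((upperSemicontinuousOn_weight_mul_norm_eval hw0 husc (T - Q)).isCompact_inter_preimage_Ici
      hK c) hlt
  exact ⟨M', hM', fun z hz hcz => hle z ⟨hz, hcz⟩⟩

theorem exists_wnorm_sub_smul_lt (hK : IsCompact K) (hw0 : ∀ z ∈ K, 0 ≤ w z)
    (husc : UpperSemicontinuousOn w K) {T Q : ℂ[X]} (hT : 0 < wnorm K w T)
    (hQ : ∀ z ∈ K, w z * ‖T.eval z‖ = wnorm K w T → Q.eval z = T.eval z) :
    ∃ ε : ℝ, 0 < ε ∧ wnorm K w (T - ε • Q) < wnorm K w T := by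
  set M := wnorm K w T
  obtain ⟨M', hM'M, hM'⟩ := exists_lt_wnorm_forall_le_of_le hK hw0 husc hQ (half_pos hT)
  obtain ⟨CQ, hCQ⟩ := bddAbove_weight_mul_norm_eval hK hw0 husc Q
  have hsmall : ∀ᶠ ε in 𝓝[>] (0 : ℝ), ε ≤ 1 ∧ M' + ε * CQ < M := by
    refine nhdsWithin_le_nhds ((eventually_le_nhds zero_lt_one).and ?_)
    have : Tendsto (fun ε : ℝ => M' + ε * CQ) (𝓝 0) (𝓝 M') :=
      (continuous_const.add (continuous_id.mul continuous_const)).tendsto' 0 M' (by simp)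
    exact this.eventually_lt_const hM'M
  obtain ⟨ε, ⟨hε1, hεQ⟩, hε0 : 0 < ε⟩ := (hsmall.and self_mem_nhdsWithin).exists
  refine ⟨ε, hε0, ?_⟩
  have hbound : ∀ z ∈ K,
      w z * ‖(T - ε • Q).eval z‖ ≤ max (M' + ε * CQ) (M - ε * M / 2) := by
    intro z hz
    rw [eval_sub, eval_smul]
    -- Where `w |T - Q| ≥ M / 2`, `w |T|` is at most `M'`; elsewhere write
    -- `T - ε Q = (1 - ε) T + ε (T - Q)`.
    by_cases hzB : M / 2 ≤ w z * ‖(T - Q).eval z‖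
    · refine le_max_of_le_left ?_
      calc w z * ‖T.eval z - ε • Q.eval z‖ ≤ w z * (‖T.eval z‖ + ε * ‖Q.eval z‖) := by
            gcongr
            · exact hw0 z hz
            · exact (norm_sub_le _ _).trans_eq (by rw [norm_smul_of_nonneg hε0.le])
        _ = w z * ‖T.eval z‖ + ε * (w z * ‖Q.eval z‖) := by ring
        _ ≤ M' + ε * CQ := by gcongr; exacts [hM' z hz hzB, hCQ (mem_image_of_mem _ hz)]
    · refine le_max_of_le_right ?_
      rw [eval_sub, not_le] at hzB
      calc w z * ‖T.eval z - ε • Q.eval z‖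
          ≤ w z * ((1 - ε) * ‖T.eval z‖ + ε * ‖T.eval z - Q.eval z‖) := by
            gcongr
            · exact hw0 z hz
            · exact norm_sub_smul_le_convex _ _ hε0.le hε1
        _ = (1 - ε) * (w z * ‖T.eval z‖) + ε * (w z * ‖T.eval z - Q.eval z‖) := by ring
        _ ≤ (1 - ε) * M + ε * (M / 2) := by
            gcongr
            exact le_wnorm hK hw0 husc T hz
        _ = M - ε * M / 2 := by ring
  exact (wnorm_le (nonempty_of_wnorm_pos hT) hbound).trans_lt (max_lt hεQ (by nlinarith))

end WeightedNorm

theorem stmt6_general (K : Set ℂ) (hK : IsCompact K) (n : ℕ) (w : ℂ → ℝ)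
    (hw0 : ∀ z ∈ K, 0 ≤ w z)
    (husc : UpperSemicontinuousOn w K)
    (hsupp : ∃ S : Finset ℂ, ↑S ⊆ K ∧ n + 1 ≤ S.card ∧ ∀ z ∈ S, w z ≠ 0)
    (T : Polynomial ℂ) (hmonic : T.Monic) (hdeg : T.natDegree = n)
    (hmin : ∀ P : Polynomial ℂ, P.Monic → P.natDegree = n → wnorm K w T ≤ wnorm K w P) :
    ∃ S : Finset ℂ, ↑S ⊆ {z ∈ K | w z * ‖T.eval z‖ = wnorm K w T} ∧
      n + 1 ≤ S.card := by
  obtain ⟨S, hSK, hScard, hSw⟩ := hsupp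
  have hpos : 0 < wnorm K w T := wnorm_pos hK hw0 husc hmonic.ne_zero hSK (by omega) hSw
  set E := {z ∈ K | w z * ‖T.eval z‖ = wnorm K w T}
  by_cases hE : E.Finite
  swap
  · obtain ⟨F, hFE, hF⟩ := Set.Infinite.exists_subset_card_eq hE (n + 1)
    exact ⟨F, hFE, hF.ge⟩
  refine ⟨hE.toFinset, by simp, ?_⟩
  by_contra! hcard
  set Q := Lagrange.interpolate hE.toFinset id T.eval
  obtain ⟨ε, -, hlt⟩ := exists_wnorm_sub_smul_lt hK hw0 husc hpos fun z hzK hz =>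
    Lagrange.eval_interpolate_at_node _ (injOn_id _) (hE.mem_toFinset.2 ⟨hzK, hz⟩)
  have hQdeg : (ε • Q).degree < T.degree := by
    refine (degree_smul_le _ _).trans_lt
      ((Lagrange.degree_interpolate_lt _ (injOn_id _)).trans_le ?_)
    rw [degree_eq_natDegree hmonic.ne_zero, hdeg]
    exact_mod_cast Nat.lt_succ_iff.1 hcard
  have hTdeg : (T - ε • Q).natDegree = n :=
    (natDegree_eq_of_degree_eq (degree_sub_eq_left_of_degree_lt hQdeg)).trans hdeg
  exact (hmin _ (hmonic.sub_of_left hQdeg) hTdeg).not_gt hlt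

theorem stmt6 (K : Set ℂ) (hK : IsCompact K) (n : ℕ) (w : ℂ → ℝ)
    (hw0 : ∀ z ∈ K, 0 ≤ w z) (hwb : BddAbove (w '' K))
    (husc : UpperSemicontinuousOn w K)
    (hsupp : ∃ S : Finset ℂ, ↑S ⊆ K ∧ n + 1 ≤ S.card ∧ ∀ z ∈ S, w z ≠ 0)
    (T : Polynomial ℂ) (hmonic : T.Monic) (hdeg : T.natDegree = n)
    (hmin : ∀ P : Polynomial ℂ, P.Monic → P.natDegree = n → wnorm K w T ≤ wnorm K w P) :
    ∃ S : Finset ℂ, ↑S ⊆ {z ∈ K | w z * ‖T.eval z‖ = wnorm K w T} ∧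
      n + 1 ≤ S.card :=
  stmt6_general K hK n w hw0 husc hsupp T hmonic hdeg hmin
end

section
/- (Invariance of Chebyshev norms under polynomial preimages) Let L ⊂ ℂ be a compact set containing at least n+1 points, w_L : L → [0,∞) a bounded upper semicontinuous function nonzero at at least n+1 points of L, and p(z) = a_m z^m + ⋯ + a₀ a polynomial of degree m ≥ 1 with a_m ≠ 0. Define K = p⁻¹(L) and w_K : K → [0,∞) by w_K(z) = w_L(p(z)). Then t_{nm}(K, w_K) = t_n(L, w_L) / |a_m|^n, where t_k(E, v) denotes the minimal value of sup_{z∈E} v(z)|P(z)| over monic polynomials P of degree k. -/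
open Polynomial Metric Set

/-- The weighted Chebyshev number `t_k(E,v) = inf { ‖P‖_{E,v} : P monic of degree k }`. -/
noncomputable def tcheb (E : Set ℂ) (v : ℂ → ℝ) (k : ℕ) : ℝ :=
  sInf {r : ℝ | ∃ P : Polynomial ℂ, P.Monic ∧ P.natDegree = k ∧ r = wnorm E v P}

/-!
Write `a` for the leading coefficient of `p`. For `Q` monic of degree `n`, `a⁻ⁿ • Q ∘ p` is monic
of degree `n * m` and, since `p` maps `K` onto `L`, its weighted norm on `K` is `‖Q‖_{L,w_L} / |a|ⁿ`.
Conversely, a monic `P` of degree `n * m` is averaged over the fibres of `p`: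
`Q(w) = aⁿ / m * ∑_{p(y) = w} P(y)` (roots with multiplicity) is a monic polynomial of degree `n`,
and the triangle inequality gives `‖Q‖_{L,w_L} ≤ |a|ⁿ ‖P‖_{K,w_K}`. That `Q` is a polynomial
rests on the root sums `∑_{p(y) = w} c(y)` with `deg c < m` not depending on `w`, which is read
off from `p' = ∑_{p(y) = w} (p - p(y)) / (X - y)`.
-/

section DivX

variable {R : Type*}

lemma coeff_divX_iterate [Semiring R] (p : R[X]) (j n : ℕ) :
    (divX^[j] p).coeff n = p.coeff (n + j) := by
  induction j generalizing n with
  | zero => rfl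
  | succ j ih => rw [Function.iterate_succ_apply', coeff_divX, ih, add_right_comm, add_assoc]

lemma natDegree_divX_iterate [Semiring R] (p : R[X]) (j : ℕ) :
    (divX^[j] p).natDegree = p.natDegree - j := by
  induction j with
  | zero => rfl
  | succ j ih => rw [Function.iterate_succ_apply', natDegree_divX_eq_natDegree_tsub_one, ih]; omega

lemma leadingCoeff_divX_iterate [Semiring R] (p : R[X]) {j : ℕ} (hj : j ≤ p.natDegree) :
    (divX^[j] p).leadingCoeff = p.leadingCoeff := by
  rw [leadingCoeff, natDegree_divX_iterate, coeff_divX_iterate, Nat.sub_add_cancel hj,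
    leadingCoeff]

lemma divX_iterate_sub_C [Ring R] (p : R[X]) (a : R) (j : ℕ) :
    divX^[j + 1] (p - C a) = divX^[j + 1] p := by
  rw [Function.iterate_succ_apply, Function.iterate_succ_apply, ← divX_hom_toFun, map_sub,
    divX_hom_toFun, divX_hom_toFun, divX_C, sub_zero]

lemma coeff_divByMonic_X_sub_C_eq_eval_divX_iterate [CommRing R] (p : R[X]) (y : R) (i : ℕ) :
    (p /ₘ (X - C y)).coeff i = (divX^[i + 1] p).eval y := by
  have hdeg : (divX^[i + 1] p).natDegree < p.natDegree + 1 := by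
    rw [natDegree_divX_iterate]; omega
  rw [coeff_divByMonic_X_sub_C, eval_eq_sum_range' hdeg, ← Finset.Ico_add_one_right_eq_Icc,
    Finset.sum_Ico_eq_sum_range]
  simp only [coeff_divX_iterate, add_tsub_cancel_left, mul_comm (y ^ _), add_comm _ (i + 1)]
  refine Finset.sum_subset (Finset.range_subset_range.mpr (by omega)) fun l _ hl => ?_
  rw [coeff_eq_zero_of_natDegree_lt (by simp at hl; omega), zero_mul]

end DivX

section RootSum

variable {k : Type*} [Field k] {f : k[X]}

noncomputable def rootSum (g : k[X]) : k[X] →ₗ[k] k where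
  toFun c := (g.roots.map c.eval).sum
  map_add' c d := by simp [Multiset.sum_map_add]
  map_smul' a c := by simp [Multiset.sum_map_mul_left]

lemma rootSum_apply (g c : k[X]) : rootSum g c = (g.roots.map c.eval).sum := rfl

lemma rootSum_sub_C_mul_pow (w : k) (c : k[X]) (j : ℕ) :
    rootSum (f - C w) (c * f ^ j) = w ^ j * rootSum (f - C w) c := by
  rw [rootSum_apply, rootSum_apply, ← Multiset.sum_map_mul_left]
  refine congrArg Multiset.sum (Multiset.map_congr rfl fun y hy => ?_)
  rw [eval_mul, eval_pow, (mem_roots_sub_C'.mp hy).2, mul_comm]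

variable [IsAlgClosed k]

lemma rootSum_sub_C_one (w : k) : rootSum (f - C w) 1 = f.natDegree := by
  simp [rootSum_apply, IsAlgClosed.card_roots_eq_natDegree]

lemma derivative_eq_sum_roots_sub_C (w : k) :
    derivative f = ((f - C w).roots.map fun y => (f - C (f.eval y)) /ₘ (X - C y)).sum := by
  classical
  have hsplit := (IsAlgClosed.splits (f - C w)).eq_prod_roots
  calc derivative f = derivative (f - C w) := by simp
    _ = ((f - C w).roots.map fun y =>
          C (f - C w).leadingCoeff * (((f - C w).roots.erase y).map (X - C ·)).prod).sum := by
      conv_lhs => rw [hsplit]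
      simp [derivative_prod, Multiset.sum_map_mul_left]
    _ = _ := by
      refine congrArg Multiset.sum (Multiset.map_congr rfl fun y hy => ?_)
      rw [(mem_roots_sub_C'.mp hy).2, eq_comm]
      conv_lhs => rw [hsplit, ← Multiset.prod_map_erase hy, mul_left_comm]
      exact mul_divByMonic_cancel_left _ (monic_X_sub_C y)

lemma rootSum_sub_C_divX_iterate (w : k) (i : ℕ) :
    rootSum (f - C w) (divX^[i + 1] f) = (derivative f).coeff i := by
  rw [derivative_eq_sum_roots_sub_C w, ← lcoeff_apply, map_multiset_sum, Multiset.map_map,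
    rootSum_apply]
  refine congrArg Multiset.sum (Multiset.map_congr rfl fun y _ => ?_)
  simp [coeff_divByMonic_X_sub_C_eq_eval_divX_iterate, divX_iterate_sub_C]

/-- The iterated `divX`s of `f` have root sums `(derivative f).coeff i`, independent of `w`, and
they form a triangular basis of the polynomials of degree `< natDegree f`. -/
lemma rootSum_sub_C_eq_of_degree_lt {c : k[X]} (hc : c.degree < f.natDegree) (w w' : k) :
    rootSum (f - C w) c = rootSum (f - C w') c := by
  have hlc (i : ℕ) (hi : i < f.natDegree) :
      (divX^[f.natDegree - i] f).leadingCoeff ≠ 0 := by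
    rw [leadingCoeff_divX_iterate f (by omega), leadingCoeff_ne_zero]
    exact ne_zero_of_natDegree_gt hi
  let S : Sequence k :=
    { elems' i := if i < f.natDegree then divX^[f.natDegree - i] f else X ^ i
      degree_eq' i := by
        split_ifs with hi
        · rw [degree_eq_natDegree (leadingCoeff_ne_zero.mp (hlc i hi)), natDegree_divX_iterate]
          congr 1
          omega
        · exact degree_X_pow i }
  have hS (i : ℕ) (hi : i < f.natDegree) : S i = divX^[f.natDegree - 1 - i + 1] f := by
    simp [S, hi, show f.natDegree - 1 - i + 1 = f.natDegree - i by omega]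
  have hspan := S.span_degreeLT (m := f.natDegree) fun i hi => by
    simpa [S, hi] using hlc i hi
  have hcspan : c ∈ Submodule.span k (S '' Set.Iio f.natDegree) := hspan ▸ mem_degreeLT.mpr hc
  rw [← sub_eq_zero, ← LinearMap.sub_apply, ← LinearMap.mem_ker]
  refine Submodule.span_le.mpr ?_ hcspan
  rintro _ ⟨i, hi, rfl⟩
  rw [SetLike.mem_coe, LinearMap.mem_ker, LinearMap.sub_apply, hS i hi,
    rootSum_sub_C_divX_iterate, rootSum_sub_C_divX_iterate, sub_self]

/-- The products `X ^ i * f ^ l` with `i < natDegree f` form a triangular basis, and on them the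
root sum over `f - C w` is `w ^ l` times a constant. -/
lemma exists_eval_eq_rootSum_sub_C (hf : 0 < f.natDegree) {j : ℕ} {R : k[X]}
    (hR : R.degree < ↑(j * f.natDegree)) :
    ∃ Q : k[X], Q.degree < j ∧ ∀ w, Q.eval w = rootSum (f - C w) R := by
  have hf0 : f ≠ 0 := by rintro rfl; simp at hf
  let S : Sequence k :=
    { elems' d := X ^ (d % f.natDegree) * f ^ (d / f.natDegree)
      degree_eq' d := by
        rw [degree_eq_natDegree (by simp [hf0]), natDegree_mul (by simp) (by simp [hf0]),
          natDegree_X_pow, natDegree_pow, Nat.mod_add_div'] }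
  have hspan := S.span_degreeLT (m := j * f.natDegree) fun d _ =>
    isUnit_iff_ne_zero.mpr (by simp [S, hf0])
  have hRspan : R ∈ Submodule.span k (S '' Set.Iio (j * f.natDegree)) :=
    hspan ▸ mem_degreeLT.mpr hR
  clear hR hspan
  induction hRspan using Submodule.span_induction with
  | mem _ hd =>
    obtain ⟨d, hd, rfl⟩ := hd
    refine ⟨C (rootSum f (X ^ (d % f.natDegree))) * X ^ (d / f.natDegree), ?_, fun w => ?_⟩
    · refine (degree_C_mul_X_pow_le _ _).trans_lt ?_
      exact_mod_cast Nat.div_lt_of_lt_mul (by simpa [mul_comm] using hd)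
    · have hconst := rootSum_sub_C_eq_of_degree_lt (c := X ^ (d % f.natDegree))
        (by rw [degree_X_pow]; exact_mod_cast Nat.mod_lt _ hf) w 0
      rw [map_zero, sub_zero] at hconst
      change _ = rootSum (f - C w) (X ^ _ * f ^ _)
      rw [rootSum_sub_C_mul_pow, hconst, eval_mul, eval_C, eval_X_pow, mul_comm]
  | zero => exact ⟨0, by simp, by simp⟩
  | add _ _ _ _ h₁ h₂ =>
    obtain ⟨Q₁, hQ₁, h₁⟩ := h₁
    obtain ⟨Q₂, hQ₂, h₂⟩ := h₂
    exact ⟨Q₁ + Q₂, (degree_add_le _ _).trans_lt (max_lt hQ₁ hQ₂), by simp [h₁, h₂]⟩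
  | smul a _ _ h =>
    obtain ⟨Q, hQ, h⟩ := h
    exact ⟨a • Q, (degree_smul_le _ _).trans_lt hQ, by simp [h]⟩

lemma exists_monic_eval_eq_rootSum_sub_C [CharZero k] (hf : 0 < f.natDegree) {n : ℕ} {P : k[X]}
    (hP : P.Monic) (hPd : P.natDegree = n * f.natDegree) :
    ∃ Q : k[X], Q.Monic ∧ Q.natDegree = n ∧
      ∀ w, Q.eval w = f.leadingCoeff ^ n / f.natDegree * rootSum (f - C w) P := by
  have hf0 : f ≠ 0 := by rintro rfl; simp at hf
  have ha : f.leadingCoeff ^ n ≠ 0 := pow_ne_zero n (leadingCoeff_ne_zero.mpr hf0)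
  have hm : (f.natDegree : k) ≠ 0 := Nat.cast_ne_zero.mpr hf.ne'
  set b := (f.leadingCoeff ^ n)⁻¹
  have hPdeg : P.degree = ↑(n * f.natDegree) := by rw [degree_eq_natDegree hP.ne_zero, hPd]
  have hR : (P - C b * f ^ n).degree < ↑(n * f.natDegree) := by
    refine hPdeg ▸ degree_sub_lt_left ?_ hP.ne_zero ?_
    · rw [hPdeg, degree_C_mul (inv_ne_zero ha), degree_pow, degree_eq_natDegree hf0]
      norm_cast
    · rw [hP.leadingCoeff, leadingCoeff_mul, leadingCoeff_C, leadingCoeff_pow, inv_mul_cancel₀ ha]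
  obtain ⟨Q₀, hQ₀, hQ₀eval⟩ := exists_eval_eq_rootSum_sub_C hf hR
  have hlow : ((f.leadingCoeff ^ n / f.natDegree) • Q₀).degree < (X ^ n : k[X]).degree := by
    rw [degree_X_pow]; exact (degree_smul_le _ _).trans_lt hQ₀
  refine ⟨X ^ n + (f.leadingCoeff ^ n / f.natDegree) • Q₀, (monic_X_pow n).add_of_left hlow,
    by rw [natDegree_add_eq_left_of_degree_lt hlow, natDegree_X_pow], fun w => ?_⟩
  have hpow : rootSum (f - C w) (C b * f ^ n) = b * (w ^ n * f.natDegree) := by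
    rw [← smul_eq_C_mul, map_smul, ← one_mul (f ^ n), rootSum_sub_C_mul_pow,
      rootSum_sub_C_one, smul_eq_mul]
  have hsplit : rootSum (f - C w) P
      = rootSum (f - C w) (P - C b * f ^ n) + b * (w ^ n * f.natDegree) := by
    rw [← hpow, ← map_add, sub_add_cancel]
  rw [eval_add, eval_pow, eval_X, eval_smul, hQ₀eval, hsplit, smul_eq_mul]
  have hb : f.leadingCoeff ^ n * b = 1 := mul_inv_cancel₀ ha
  field_simp
  linear_combination (-(w ^ n * f.natDegree)) * hb

end RootSum

section WeightedNorm

variable {E : Set ℂ} {v : ℂ → ℝ}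

lemma bddAbove_weighted_norm_image (hE : IsCompact E) (hv : BddAbove (v '' E)) (P : ℂ[X]) :
    BddAbove ((fun z => v z * ‖P.eval z‖) '' E) := by
  obtain ⟨A, hA⟩ := hv
  obtain ⟨B, hB⟩ := hE.exists_bound_of_continuousOn P.continuous.continuousOn
  refine ⟨max A 0 * B, ?_⟩
  rintro _ ⟨z, hz, rfl⟩
  exact mul_le_mul ((hA ⟨z, hz, rfl⟩).trans (le_max_left _ _)) (hB z hz) (norm_nonneg _)
    (le_max_right _ _)

lemma wnorm_nonneg (hv : ∀ z ∈ E, 0 ≤ v z) (P : ℂ[X]) : 0 ≤ wnorm E v P :=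
  Real.sSup_nonneg <| by
    rintro _ ⟨z, hz, rfl⟩
    exact mul_nonneg (hv z hz) (norm_nonneg _)

lemma le_wnorm_s15 (hE : IsCompact E) (hv : BddAbove (v '' E)) (P : ℂ[X]) {z : ℂ} (hz : z ∈ E) :
    v z * ‖P.eval z‖ ≤ wnorm E v P :=
  le_csSup (bddAbove_weighted_norm_image hE hv P) ⟨z, hz, rfl⟩

lemma wnorm_C_mul (a : ℂ) (P : ℂ[X]) : wnorm E v (C a * P) = ‖a‖ * wnorm E v P := by
  have h := Real.sSup_smul_of_nonneg (norm_nonneg a) ((fun z => v z * ‖P.eval z‖) '' E)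
  rw [smul_eq_mul, ← image_smul, image_image] at h
  rw [wnorm, wnorm, ← h]
  refine congrArg sSup (image_congr fun z _ => ?_)
  simp only [eval_mul, eval_C, norm_mul, smul_eq_mul]
  ring

lemma wnorm_comp_preimage {p : ℂ[X]} (hp : p.natDegree ≠ 0) (L : Set ℂ) (w : ℂ → ℝ) (Q : ℂ[X]) :
    wnorm (p.eval ⁻¹' L) (fun z => w (p.eval z)) (Q.comp p) = wnorm L w Q := by
  conv_rhs => rw [wnorm, ← image_preimage_eq L (IsAlgClosed.eval_surjective hp), image_image]
  simp [wnorm, eval_comp]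

lemma tcheb_le_wnorm (hv : ∀ z ∈ E, 0 ≤ v z) {P : ℂ[X]} {k : ℕ} (hP : P.Monic)
    (hPk : P.natDegree = k) : tcheb E v k ≤ wnorm E v P :=
  csInf_le ⟨0, by rintro _ ⟨Q, -, -, rfl⟩; exact wnorm_nonneg hv Q⟩ ⟨P, hP, hPk, rfl⟩

lemma le_tcheb {r : ℝ} {k : ℕ} (h : ∀ P : ℂ[X], P.Monic → P.natDegree = k → r ≤ wnorm E v P) :
    r ≤ tcheb E v k :=
  le_csInf ⟨_, X ^ k, monic_X_pow k, natDegree_X_pow k, rfl⟩ <| by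
    rintro _ ⟨P, hP, hPk, rfl⟩
    exact h P hP hPk

end WeightedNorm

lemma mul_norm_rootSum_le {k : Type*} [NormedField k] {g c : k[X]} {a N : ℝ} (ha : 0 ≤ a)
    (h : ∀ y ∈ g.roots, a * ‖c.eval y‖ ≤ N) : a * ‖rootSum g c‖ ≤ g.roots.card * N :=
  calc a * ‖rootSum g c‖ ≤ a * (g.roots.map fun y => ‖c.eval y‖).sum := by
        gcongr
        simpa only [rootSum_apply, Multiset.map_map, Function.comp_def] using
          norm_multiset_sum_le (g.roots.map c.eval)
    _ = (g.roots.map fun y => a * ‖c.eval y‖).sum := Multiset.sum_map_mul_left.symm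
    _ ≤ (g.roots.map fun y => a * ‖c.eval y‖).card • N :=
        Multiset.sum_le_card_nsmul _ _ (Multiset.forall_mem_map_iff.mpr h)
    _ = g.roots.card * N := by rw [Multiset.card_map, nsmul_eq_mul]

section Preimage

variable {L : Set ℂ} {w : ℂ → ℝ} {p : ℂ[X]}

lemma exists_monic_wnorm_preimage_eq (hp : 0 < p.natDegree) {Q : ℂ[X]} (hQ : Q.Monic) :
    ∃ P : ℂ[X], P.Monic ∧ P.natDegree = Q.natDegree * p.natDegree ∧
      wnorm (p.eval ⁻¹' L) (fun z => w (p.eval z)) P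
        = wnorm L w Q / ‖p.leadingCoeff‖ ^ Q.natDegree := by
  have ha : p.leadingCoeff ^ Q.natDegree ≠ 0 :=
    pow_ne_zero _ (leadingCoeff_ne_zero.mpr (ne_zero_of_natDegree_gt hp))
  refine ⟨C (p.leadingCoeff ^ Q.natDegree)⁻¹ * Q.comp p, ?_, ?_, ?_⟩
  · refine monic_C_mul_of_mul_leadingCoeff_eq_one ?_
    rw [leadingCoeff_comp hp.ne', hQ.leadingCoeff, one_mul, inv_mul_cancel₀ ha]
  · rw [natDegree_C_mul (inv_ne_zero ha), natDegree_comp]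
  · rw [wnorm_C_mul, wnorm_comp_preimage hp.ne', norm_inv, norm_pow, div_eq_inv_mul]

lemma exists_monic_wnorm_le_wnorm_preimage (hL : IsCompact L) (hw0 : ∀ z ∈ L, 0 ≤ w z)
    (hwb : BddAbove (w '' L)) (hp : 0 < p.natDegree) {n : ℕ} {P : ℂ[X]} (hP : P.Monic)
    (hPd : P.natDegree = n * p.natDegree) :
    ∃ Q : ℂ[X], Q.Monic ∧ Q.natDegree = n ∧
      wnorm L w Q ≤ ‖p.leadingCoeff‖ ^ n * wnorm (p.eval ⁻¹' L) (fun z => w (p.eval z)) P := by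
  obtain ⟨Q, hQ, hQd, hQeval⟩ := exists_monic_eval_eq_rootSum_sub_C hp hP hPd
  set N := wnorm (p.eval ⁻¹' L) (fun z => w (p.eval z)) P
  have hN : 0 ≤ N := wnorm_nonneg (E := p.eval ⁻¹' L) (fun z hz => hw0 _ hz) P
  refine ⟨Q, hQ, hQd, Real.sSup_le ?_ (by positivity)⟩
  rintro _ ⟨x, hx, rfl⟩
  have hK : IsCompact (p.eval ⁻¹' L) :=
    (p.isProperMap_eval (natDegree_pos_iff_degree_pos.mp hp)).isCompact_preimage hL
  have hwK : BddAbove ((fun z => w (p.eval z)) '' (p.eval ⁻¹' L)) :=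
    hwb.mono (by rintro _ ⟨z, hz, rfl⟩; exact ⟨_, hz, rfl⟩)
  have hroot (y : ℂ) (hy : y ∈ (p - C x).roots) : w x * ‖P.eval y‖ ≤ N := by
    have hpy : p.eval y = x := (mem_roots_sub_C (natDegree_pos_iff_degree_pos.mp hp)).mp hy
    have := le_wnorm_s15 hK hwK P (show p.eval y ∈ L from hpy ▸ hx)
    rwa [hpy] at this
  have hsum := mul_norm_rootSum_le (hw0 x hx) hroot
  rw [IsAlgClosed.card_roots_eq_natDegree, natDegree_sub_C] at hsum
  have hm : (0 : ℝ) < p.natDegree := by exact_mod_cast hp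
  calc w x * ‖Q.eval x‖
      = ‖p.leadingCoeff‖ ^ n / p.natDegree * (w x * ‖rootSum (p - C x) P‖) := by
        rw [hQeval, norm_mul, norm_div, norm_pow, Complex.norm_natCast]; ring
    _ ≤ ‖p.leadingCoeff‖ ^ n / p.natDegree * (p.natDegree * N) := by gcongr
    _ = ‖p.leadingCoeff‖ ^ n * N := by field_simp

end Preimage

theorem stmt15_general (L : Set ℂ) (hL : IsCompact L) (n : ℕ)
    (wL : ℂ → ℝ) (hw0 : ∀ z ∈ L, 0 ≤ wL z) (hwb : BddAbove (wL '' L))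
    (p : Polynomial ℂ) (m : ℕ) (hm : 1 ≤ m) (hpdeg : p.natDegree = m)
    (K : Set ℂ) (hK : K = (fun z => p.eval z) ⁻¹' L)
    (wK : ℂ → ℝ) (hwK : ∀ z, wK z = wL (p.eval z)) :
    tcheb K wK (n * m) = tcheb L wL n / ‖p.leadingCoeff‖ ^ n := by
  obtain rfl : wK = fun z => wL (p.eval z) := funext hwK
  subst hK hpdeg
  have ha : 0 < ‖p.leadingCoeff‖ ^ n :=
    pow_pos (norm_pos_iff.mpr (leadingCoeff_ne_zero.mpr (ne_zero_of_natDegree_gt hm))) n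
  apply le_antisymm
  · rw [le_div_iff₀ ha]
    refine le_tcheb fun Q hQ hQd => ?_
    obtain ⟨P, hP, hPd, hPQ⟩ := exists_monic_wnorm_preimage_eq (L := L) (w := wL) hm hQ
    rw [← le_div_iff₀ ha, ← hQd, ← hPQ]
    exact tcheb_le_wnorm (E := p.eval ⁻¹' L) (fun z hz => hw0 _ hz) hP hPd
  · refine le_tcheb fun P hP hPd => ?_
    obtain ⟨Q, hQ, hQd, hQP⟩ := exists_monic_wnorm_le_wnorm_preimage hL hw0 hwb hm hP hPd
    rw [div_le_iff₀ ha, mul_comm]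
    exact (tcheb_le_wnorm hw0 hQ hQd).trans hQP

/-- Invariance of weighted Chebyshev norms under polynomial preimages:
`t_{nm}(K, w_K) = t_n(L, w_L) / |a_m|^n` where `K = p⁻¹(L)` and `w_K = w_L ∘ p`. -/
theorem stmt15 (L : Set ℂ) (hL : IsCompact L) (n : ℕ)
    (hLpts : ∃ S : Finset ℂ, ↑S ⊆ L ∧ n + 1 ≤ S.card)
    (wL : ℂ → ℝ) (hw0 : ∀ z ∈ L, 0 ≤ wL z) (hwb : BddAbove (wL '' L))
    (husc : UpperSemicontinuousOn wL L)
    (hsupp : ∃ S : Finset ℂ, ↑S ⊆ L ∧ n + 1 ≤ S.card ∧ ∀ z ∈ S, wL z ≠ 0)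
    (p : Polynomial ℂ) (m : ℕ) (hm : 1 ≤ m) (hpdeg : p.natDegree = m)
    (K : Set ℂ) (hK : K = (fun z => p.eval z) ⁻¹' L)
    (wK : ℂ → ℝ) (hwK : ∀ z, wK z = wL (p.eval z)) :
    tcheb K wK (n * m) = tcheb L wL n / ‖p.leadingCoeff‖ ^ n :=
  stmt15_general L hL n wL hw0 hwb p m hm hpdeg K hK wK hwK
end
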